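/- Every 6-dimensional naturally graded quasi-filiform complex Zinbiel algebra of type A_(3) is isomorphic to the algebra with basis e_1, …, e_6 and products e_1∘e_2 = e_3, e_1∘e_3 = e_4, e_1∘e_5 = e_6, e_2∘e_1 = −e_3, e_2∘e_3 = e_5, e_2∘e_4 = −e_6, e_3∘e_3 = e_6, e_4∘e_2 = e_6, e_5∘e_1 = −e_6, all other products of basis vectors being zero. -/

import Mathlib

/-!
If `x ∘ x ≠ 0` for some `x ∈ A₁`, then `A₂ = ℂ (x ∘ x)`, because `6 = 2 + dim A₂ + 2 + dim A₄`
with `A₄ = A⁴ ≠ 0`. The Zinbiel identity applied to `(u ∘ x) ∘ x` gives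
`u ∘ (x ∘ x) = μ x ∘ (x ∘ x)` whenever `u ∘ x = μ x ∘ x`, so `A₃ = A₁ ∘ A₂` would be at most a
line. Hence squares vanish on `A₁`, which makes the product anticommutative there.

A natural grading is generated by its first part (`A_{k+1} = A₁ ∘ A_k`), so for a basis `x, y` of
`A₁` the right-normed monomials `x, y, xy, x(xy), y(xy), x(y(xy))` span `A`; having dimension 6 they
are a basis. Their products of weight at most 4 follow from the Zinbiel identity and
anticommutativity on `A₁`; all the others vanish for degree reasons.
-/

/-- A complex Zinbiel algebra structure on the module `A`: a bilinear
multiplication satisfying `(x∘y)∘z = x∘(y∘z) + x∘(z∘y)`. -/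
structure ZinbielStr (A : Type*) [AddCommGroup A] [Module ℂ A] where
  mul : A →ₗ[ℂ] A →ₗ[ℂ] A
  zinbiel : ∀ x y z : A, mul (mul x y) z = mul x (mul y z) + mul x (mul z y)

namespace ZinbielStr

variable {A : Type*} [AddCommGroup A] [Module ℂ A]

/-- `M.lcs k` is the term `A^k` of the lower central series for `k ≥ 1`
(`A^1 = A`, `A^{k+1} = span (A ∘ A^k)`), with the convention `M.lcs 0 = ⊤`. -/
def lcs (M : ZinbielStr A) : ℕ → Submodule ℂ A
  | 0 => ⊤
  | 1 => ⊤
  | k + 2 => Submodule.span ℂ {z | ∃ a b, b ∈ lcs M (k + 1) ∧ z = M.mul a b}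

/-- A Zinbiel algebra is nilpotent when some term of the lower central series vanishes. -/
def IsNilpotent (M : ZinbielStr A) : Prop := ∃ s, 1 ≤ s ∧ M.lcs s = ⊥

/-- `Ag` is a natural grading of `M` with parts `Ag 1, …, Ag t`:
the parts are independent, `A_i ∘ A_j ⊆ A_{i+j}` (with `A_k = 0` for `k > t` and `k = 0`),
and `A^k = A_k ⊕ A_{k+1} ⊕ ⋯ ⊕ A_t` for all `1 ≤ k ≤ t`. -/
structure IsNaturalGrading (M : ZinbielStr A) (t : ℕ) (Ag : ℕ → Submodule ℂ A) : Prop where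
  zero_deg : Ag 0 = ⊥
  high_deg : ∀ k, t < k → Ag k = ⊥
  indep : iSupIndep Ag
  mul_mem : ∀ i j x y, x ∈ Ag i → y ∈ Ag j → M.mul x y ∈ Ag (i + j)
  lcs_eq : ∀ k, 1 ≤ k → k ≤ t → M.lcs k = ⨆ j, ⨆ (_ : k ≤ j), Ag j

/-- An `n`-dimensional Zinbiel algebra is quasi-filiform if `A^{n-2} ≠ 0` and `A^{n-1} = 0`. -/
def IsQuasiFiliform (M : ZinbielStr A) (n : ℕ) : Prop :=
  Module.finrank ℂ A = n ∧ M.lcs (n - 2) ≠ ⊥ ∧ M.lcs (n - 1) = ⊥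

end ZinbielStr

theorem iSupIndep.finrank_finset_sup {ι K V : Type*} [DecidableEq ι] [DivisionRing K]
    [AddCommGroup V] [Module K V] [FiniteDimensional K V] {p : ι → Submodule K V}
    (hp : iSupIndep p) (s : Finset ι) :
    Module.finrank K ↥(s.sup p) = ∑ i ∈ s, Module.finrank K (p i) := by
  induction s using Finset.induction_on with
  | empty => simp
  | insert i s hi ih =>
    have hdisj : Disjoint (p i) (s.sup p) := by
      rw [Finset.sup_eq_iSup]
      exact hp.disjoint_biSup hi
    have h := Submodule.finrank_sup_add_finrank_inf_eq (p i) (s.sup p)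
    rw [hdisj.eq_bot, finrank_bot, add_zero] at h
    rw [Finset.sup_insert, Finset.sum_insert hi, h, ih]

theorem Submodule.exists_le_span_pair_of_finrank_eq_two {K V : Type*} [DivisionRing K]
    [AddCommGroup V] [Module K V] [FiniteDimensional K V] {p : Submodule K V}
    (h : Module.finrank K p = 2) : ∃ x ∈ p, ∃ y ∈ p, p ≤ Submodule.span K {x, y} := by
  let b := Module.finBasisOfFinrankEq K p h
  refine ⟨b 0, (b 0).2, b 1, (b 1).2, fun z hz => ?_⟩
  have hz' : b.repr ⟨z, hz⟩ 0 • (b 0 : V) + b.repr ⟨z, hz⟩ 1 • (b 1 : V) = z := by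
    simpa only [Fin.sum_univ_two, Submodule.coe_add, Submodule.coe_smul] using
      congrArg Subtype.val (b.sum_repr ⟨z, hz⟩)
  rw [← hz']
  exact add_mem (Submodule.smul_mem _ _ (Submodule.subset_span (by simp)))
    (Submodule.smul_mem _ _ (Submodule.subset_span (by simp)))

namespace ZinbielStr

variable {A : Type*} [AddCommGroup A] [Module ℂ A]

theorem mul_mul_self_of_mul_eq_smul (M : ZinbielStr A) {u x : A} {μ : ℂ}
    (h : M.mul u x = μ • M.mul x x) : M.mul u (M.mul x x) = μ • M.mul x (M.mul x x) := by
  have hu := M.zinbiel u x x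
  rw [h, map_smul, LinearMap.smul_apply, M.zinbiel x x x, ← two_smul ℂ, ← two_smul ℂ,
    smul_comm] at hu
  exact (smul_right_injective A two_ne_zero hu).symm

theorem lcs_add_two_eq_map₂ (M : ZinbielStr A) (k : ℕ) :
    M.lcs (k + 2) = Submodule.map₂ M.mul ⊤ (M.lcs (k + 1)) := by
  rw [Submodule.map₂_eq_span_image2, lcs]
  congr 1
  ext z
  simp [eq_comm]

theorem mul_swap_eq_neg (M : ZinbielStr A) {p : Submodule ℂ A}
    (hsq : ∀ z ∈ p, M.mul z z = 0) {x y : A} (hx : x ∈ p) (hy : y ∈ p) :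
    M.mul y x = -M.mul x y :=
  (LinearMap.IsAlt.neg (B := M.mul.compl₁₂ p.subtype p.subtype)
    (fun z => hsq z z.2) ⟨x, hx⟩ ⟨y, hy⟩).symm

namespace IsNaturalGrading

variable {M : ZinbielStr A} {t : ℕ} {Ag : ℕ → Submodule ℂ A}

theorem mul_eq_zero_of_lt (hg : M.IsNaturalGrading t Ag) {i j : ℕ} {x y : A} (hij : t < i + j)
    (hx : x ∈ Ag i) (hy : y ∈ Ag j) : M.mul x y = 0 := by
  simpa [hg.high_deg _ hij] using hg.mul_mem i j x y hx hy

theorem iSup_eq_top (hg : M.IsNaturalGrading t Ag) (ht : 1 ≤ t) : ⨆ i, Ag i = ⊤ :=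
  top_unique <| (hg.lcs_eq 1 le_rfl ht).trans_le (iSup₂_le fun i _ => le_iSup Ag i)

theorem range_sup_eq_top (hg : M.IsNaturalGrading t Ag) (ht : 1 ≤ t) :
    (Finset.range (t + 1)).sup Ag = ⊤ := by
  refine top_unique ((hg.iSup_eq_top ht).symm.trans_le (iSup_le fun i => ?_))
  rcases le_or_gt i t with hi | hi
  · exact Finset.le_sup (Finset.mem_range.mpr (Nat.lt_succ_of_le hi))
  · simp [hg.high_deg i hi]

theorem finrank_eq_sum (hg : M.IsNaturalGrading t Ag) (ht : 1 ≤ t) [FiniteDimensional ℂ A] :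
    Module.finrank ℂ A = ∑ i ∈ Finset.range (t + 1), Module.finrank ℂ (Ag i) := by
  rw [← hg.indep.finrank_finset_sup, hg.range_sup_eq_top ht, finrank_top]

theorem le_lcs (hg : M.IsNaturalGrading t Ag) {k : ℕ} (hk : 1 ≤ k) (hkt : k ≤ t) :
    Ag k ≤ M.lcs k :=
  (hg.lcs_eq k hk hkt).symm ▸ le_iSup₂ (f := fun j (_ : k ≤ j) => Ag j) k le_rfl

theorem lcs_last_eq (hg : M.IsNaturalGrading t Ag) (ht : 1 ≤ t) : M.lcs t = Ag t := by
  refine (hg.lcs_eq t ht le_rfl).trans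
    (le_antisymm (iSup₂_le fun j hj => ?_) (le_iSup₂ (f := fun j (_ : t ≤ j) => Ag j) t le_rfl))
  rcases hj.eq_or_lt with rfl | hj
  · exact le_rfl
  · simp [hg.high_deg j hj]

theorem succ_le_map₂ (hg : M.IsNaturalGrading t Ag) {k : ℕ} (hk : 1 ≤ k) (hkt : k < t) :
    Ag (k + 1) ≤ Submodule.map₂ M.mul (Ag 1) (Ag k) := by
  set S := Submodule.map₂ M.mul (Ag 1) (Ag k)
  set R := ⨆ m, ⨆ (_ : k + 2 ≤ m), Ag m
  have hS : S ≤ Ag (k + 1) :=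
    Submodule.map₂_le.mpr fun x hx y hy => by simpa [add_comm] using hg.mul_mem 1 k x y hx hy
  have hR : Disjoint (Ag (k + 1)) R :=
    (hg.indep (k + 1)).mono_right (iSup₂_mono' fun m hm => ⟨m, by omega, le_rfl⟩)
  have hlcs : M.lcs (k + 1) ≤ S ⊔ R := by
    obtain ⟨k, rfl⟩ := Nat.exists_eq_add_of_le' hk
    rw [lcs_add_two_eq_map₂, ← hg.iSup_eq_top (by omega), hg.lcs_eq (k + 1) hk hkt.le,
      Submodule.map₂_iSup_left]
    refine iSup_le fun i => ?_
    simp only [Submodule.map₂_iSup_right]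
    refine iSup₂_le fun j hj => Submodule.map₂_le.mpr fun x hx y hy => ?_
    rcases Nat.eq_zero_or_pos i with rfl | hi
    · simp [show x = 0 by simpa [hg.zero_deg] using hx]
    rcases (show (i = 1 ∧ j = k + 1) ∨ k + 3 ≤ i + j by omega) with ⟨rfl, rfl⟩ | hij
    · exact Submodule.mem_sup_left (Submodule.apply_mem_map₂ _ hx hy)
    · exact Submodule.mem_sup_right
        ((le_iSup₂ (f := fun m (_ : k + 3 ≤ m) => Ag m) (i + j) hij) (hg.mul_mem i j x y hx hy))
  have h := inf_eq_right.mpr ((hg.le_lcs (by omega) hkt).trans hlcs)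
  rw [sup_inf_assoc_of_le R hS, inf_comm, hR.eq_bot, sup_bot_eq] at h
  exact h.ge

theorem top_le_span (hg : M.IsNaturalGrading t Ag) (ht : 1 ≤ t) {s : Set A}
    (h1 : Ag 1 ≤ Submodule.span ℂ s) (hs : ∀ a ∈ s, ∀ b ∈ s, M.mul a b ∈ Submodule.span ℂ s) :
    ⊤ ≤ Submodule.span ℂ s := by
  have hmul : Submodule.map₂ M.mul (Submodule.span ℂ s) (Submodule.span ℂ s) ≤
      Submodule.span ℂ s := by
    rw [Submodule.map₂_span_span, Submodule.span_le]
    rintro _ ⟨a, ha, b, hb, rfl⟩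
    exact hs a ha b hb
  have hle : ∀ k, Ag k ≤ Submodule.span ℂ s := by
    intro k
    induction k with
    | zero => simp [hg.zero_deg]
    | succ k ih =>
      rcases Nat.eq_zero_or_pos k with rfl | hk
      · exact h1
      rcases lt_or_ge k t with hkt | hkt
      · exact (hg.succ_le_map₂ hk hkt).trans ((Submodule.map₂_le_map₂ h1 ih).trans hmul)
      · simp [hg.high_deg (k + 1) (by omega)]
  rw [← hg.iSup_eq_top ht]
  exact iSup_le hle

theorem mul_self_eq_zero [FiniteDimensional ℂ A] (hg : M.IsNaturalGrading t Ag) (ht : 2 < t)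
    (h2 : Module.finrank ℂ (Ag 2) ≤ 1) (h3 : 1 < Module.finrank ℂ (Ag 3)) {x : A}
    (hx : x ∈ Ag 1) : M.mul x x = 0 := by
  by_contra hxx
  have hAg2 : Ag 2 = ℂ ∙ M.mul x x :=
    (Submodule.eq_of_le_of_finrank_le
      (Submodule.span_singleton_le_iff_mem _ _ |>.mpr (hg.mul_mem 1 1 x x hx hx))
      (by rwa [finrank_span_singleton hxx])).symm
  have hAg3 : Ag 3 ≤ ℂ ∙ M.mul x (M.mul x x) := by
    refine (hg.succ_le_map₂ (k := 2) (by norm_num) ht).trans ?_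
    rw [hAg2, Submodule.map₂_span_singleton_eq_map_flip, Submodule.map_le_iff_le_comap]
    intro u hu
    obtain ⟨μ, hμ⟩ := Submodule.mem_span_singleton.mp (hAg2 ▸ hg.mul_mem 1 1 u x hu hx)
    simpa [mul_mul_self_of_mul_eq_smul M hμ.symm] using
      Submodule.smul_mem _ μ (Submodule.mem_span_singleton_self _)
  have h := (Submodule.finrank_mono hAg3).trans (finrank_span_le_card {M.mul x (M.mul x x)})
  simp only [Set.toFinset_singleton, Finset.card_singleton] at h
  omega

end IsNaturalGrading

/-- `e₁, …, e₆` of the classification, indexed from `0`, with generators `x = e₁` and `y = e₂`. -/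
def monomials (M : ZinbielStr A) (x y : A) : Fin 6 → A :=
  ![x, y, M.mul x y, M.mul x (M.mul x y), M.mul y (M.mul x y), M.mul x (M.mul y (M.mul x y))]

def monomialWeight : Fin 6 → ℕ := ![1, 1, 2, 3, 3, 4]

def typeThreeTable (e : Fin 6 → A) : Fin 6 → Fin 6 → A :=
  ![![0, e 2, e 3, 0, e 5, 0],
    ![-e 2, 0, e 4, -e 5, 0, 0],
    ![0, 0, e 5, 0, 0, 0],
    ![0, e 5, 0, 0, 0, 0],
    ![-e 5, 0, 0, 0, 0, 0],
    ![0, 0, 0, 0, 0, 0]]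

theorem typeThreeTable_mem_span (e : Fin 6 → A) (i j : Fin 6) :
    typeThreeTable e i j ∈ Submodule.span ℂ (Set.range e) := by
  fin_cases i <;> fin_cases j
  all_goals first
    | exact zero_mem _
    | exact Submodule.subset_span ⟨_, rfl⟩
    | exact neg_mem (Submodule.subset_span ⟨_, rfl⟩)

theorem monomials_mem {M : ZinbielStr A} {t : ℕ} {Ag : ℕ → Submodule ℂ A}
    (hg : M.IsNaturalGrading t Ag) {x y : A} (hx : x ∈ Ag 1) (hy : y ∈ Ag 1) (i : Fin 6) :
    M.monomials x y i ∈ Ag (monomialWeight i) := by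
  have h3 := hg.mul_mem 1 1 x y hx hy
  have h5 := hg.mul_mem 1 2 y _ hy h3
  fin_cases i
  exacts [hx, hy, h3, hg.mul_mem 1 2 x _ hx h3, h5, hg.mul_mem 1 3 x _ hx h5]

theorem mul_monomials {M : ZinbielStr A} {Ag : ℕ → Submodule ℂ A}
    (hg : M.IsNaturalGrading 4 Ag) (hsq : ∀ z ∈ Ag 1, M.mul z z = 0) {x y : A}
    (hx : x ∈ Ag 1) (hy : y ∈ Ag 1) (i j : Fin 6) :
    M.mul (M.monomials x y i) (M.monomials x y j) = typeThreeTable (M.monomials x y) i j := by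
  have hxx := hsq x hx
  have hyy := hsq y hy
  have hyx := M.mul_swap_eq_neg hsq hx hy
  set e₃ := M.mul x y
  set e₄ := M.mul x e₃
  set e₅ := M.mul y e₃
  set e₆ := M.mul x e₅
  have h31 : M.mul e₃ x = 0 := by rw [M.zinbiel, hyx, map_neg, neg_add_cancel]
  have h32 : M.mul e₃ y = 0 := by rw [M.zinbiel, hyy, map_zero, add_zero]
  have h33 : M.mul e₃ e₃ = e₆ := by rw [M.zinbiel, h32, map_zero, add_zero]
  have h14 : M.mul x e₄ = 0 := by
    simpa [hxx, h31] using (M.zinbiel x x e₃).symm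
  have h24 : M.mul y e₄ = -e₆ := by
    simpa [hyx, h31, h33] using (M.zinbiel y x e₃).symm
  have h25 : M.mul y e₅ = 0 := by
    simpa [hyy, h32] using (M.zinbiel y y e₃).symm
  have h41 : M.mul e₄ x = 0 := by rw [M.zinbiel, h31, h14, map_zero, add_zero]
  have h42 : M.mul e₄ y = e₆ := by rw [M.zinbiel, h32, map_zero, zero_add]
  have h51 : M.mul e₅ x = -e₆ := by rw [M.zinbiel, h31, h24, map_zero, zero_add]
  have h52 : M.mul e₅ y = 0 := by rw [M.zinbiel, h32, h25, map_zero, add_zero]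
  have htrunc : ∀ i j, 4 < monomialWeight i + monomialWeight j →
      M.mul (M.monomials x y i) (M.monomials x y j) = 0 := fun i j h =>
    hg.mul_eq_zero_of_lt h (monomials_mem hg hx hy i) (monomials_mem hg hx hy j)
  fin_cases i <;> fin_cases j
  all_goals first
    | rfl
    | assumption
    | exact htrunc _ _ (by decide)

/-- Every 6-dimensional naturally graded quasi-filiform complex Zinbiel
algebra of type `A_(3)` is isomorphic to a single explicit algebra. -/
theorem dim6_type_three_classification {A : Type*} [AddCommGroup A] [Module ℂ A]
    [FiniteDimensional ℂ A] (M : ZinbielStr A)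
    (Ag : ℕ → Submodule ℂ A)
    (hqf : M.IsQuasiFiliform 6) (hg : M.IsNaturalGrading 4 Ag)
    (h1 : Module.finrank ℂ (Ag 1) = 2) (h2 : Module.finrank ℂ (Ag 3) = 2) :
    ∃ e : Module.Basis (Fin 6) ℂ A, ∀ i j : Fin 6,
      M.mul (e i) (e j) =
        ![![0, e 2, e 3, 0, e 5, 0],
           ![-e 2, 0, e 4, -e 5, 0, 0],
           ![0, 0, e 5, 0, 0, 0],
           ![0, e 5, 0, 0, 0, 0],
           ![-e 5, 0, 0, 0, 0, 0],
           ![0, 0, 0, 0, 0, 0]] i j := by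
  obtain ⟨hdim, hlcs, -⟩ := hqf
  have hAg4 : 1 ≤ Module.finrank ℂ (Ag 4) :=
    Submodule.one_le_finrank_iff.mpr (hg.lcs_last_eq (by norm_num) ▸ hlcs)
  have hAg2 : Module.finrank ℂ (Ag 2) ≤ 1 := by
    have h := hg.finrank_eq_sum (by norm_num)
    simp only [Finset.sum_range_succ, Finset.sum_range_zero, h1, h2, hdim] at h
    omega
  have hsq : ∀ z ∈ Ag 1, M.mul z z = 0 := fun z => hg.mul_self_eq_zero (by norm_num) hAg2 (by omega)
  obtain ⟨x, hx, y, hy, hxy⟩ := Submodule.exists_le_span_pair_of_finrank_eq_two h1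
  have hspan : ⊤ ≤ Submodule.span ℂ (Set.range (M.monomials x y)) := by
    refine hg.top_le_span (by norm_num) (hxy.trans (Submodule.span_mono ?_)) ?_
    · rintro _ (rfl | rfl)
      exacts [⟨0, rfl⟩, ⟨1, rfl⟩]
    · rintro _ ⟨i, rfl⟩ _ ⟨j, rfl⟩
      rw [mul_monomials hg hsq hx hy]
      exact typeThreeTable_mem_span _ i j
  refine ⟨basisOfTopLeSpanOfCardEqFinrank _ hspan (by simp [hdim]), fun i j => ?_⟩
  rw [coe_basisOfTopLeSpanOfCardEqFinrank]
  exact mul_monomials hg hsq hx hy i j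

end ZinbielStr
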